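/- arXiv:1801.00357 — 2 statements merged into one kernel-verified Lean document; each statement's English description precedes it below -/
import Mathlib

section
/- There is an isomorphism of ℂ-algebras ℂPT_n ≅ ℂE_n. -/
set_option linter.unusedSectionVars false

open CategoryTheory

namespace CatAlgebra

variable (C : Type) [Category.{0} C] [Fintype C] [∀ a b : C, Fintype (a ⟶ b)]
  [DecidableEq C] [∀ a b : C, DecidableEq (a ⟶ b)]

/-- The type of morphisms of `C`, bundled with their endpoints. -/
abbrev Mor := Σ a b : C, a ⟶ b

instance : Fintype (Mor C) := by unfold Mor; infer_instance
instance : DecidableEq (Mor C) := by unfold Mor; exact Sigma.instDecidableEqSigma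

variable {C}

/-- Partial composition: `pcomp p q` is "`p` after `q`" when defined. -/
def pcomp (p q : Mor C) : Option (Mor C) :=
  if h : q.2.1 = p.1 then some ⟨q.1, p.2.1, (q.2.2 ≫ eqToHom h) ≫ p.2.2⟩ else none

lemma pcomp_assoc (p q r : Mor C) :
    (pcomp p q).bind (fun s => pcomp s r) = (pcomp q r).bind (fun s => pcomp p s) := by
  obtain ⟨a, b, f⟩ := p
  obtain ⟨c, d, g⟩ := q
  obtain ⟨e, e', h⟩ := r
  by_cases h1 : d = a <;> by_cases h2 : e' = c <;>
    simp [pcomp, h1, h2, Category.assoc]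

/-- The identity morphism at `a`, as an element of `Mor C`. -/
def idMor (a : C) : Mor C := ⟨a, a, 𝟙 a⟩

lemma idMor_injective : Function.Injective (idMor (C := C)) := by
  intro a b h
  exact congrArg Sigma.fst h

lemma pcomp_idMor_left (q : Mor C) : pcomp (idMor q.2.1) q = some q := by
  obtain ⟨a, b, f⟩ := q
  simp [pcomp, idMor]
  exact Category.comp_id f

lemma pcomp_idMor_right (p : Mor C) : pcomp p (idMor p.1) = some p := by
  obtain ⟨a, b, f⟩ := p
  simp [pcomp, idMor]

lemma eq_of_pcomp_idMor_left {a : C} {q m : Mor C} (h : pcomp (idMor a) q = some m) :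
    q = m ∧ a = q.2.1 := by
  obtain ⟨c, d, g⟩ := q
  by_cases h1 : d = a
  · subst h1
    simp [pcomp, idMor] at h
    subst h
    exact ⟨congrArg (fun k => (⟨c, d, k⟩ : Mor C)) (Category.comp_id g).symm, rfl⟩
  · simp [pcomp, idMor, h1] at h

lemma eq_of_pcomp_idMor_right {a : C} {p m : Mor C} (h : pcomp p (idMor a) = some m) :
    p = m ∧ a = p.1 := by
  obtain ⟨c, d, g⟩ := p
  by_cases h1 : a = c
  · subst h1
    simp [pcomp, idMor] at h
    subst h
    exact ⟨rfl, rfl⟩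
  · simp [pcomp, idMor, h1] at h

variable (C)

/-- The complex category algebra of a finite category `C`: the vector space of
`ℂ`-valued functions on the set of morphisms of `C`, with convolution product
(`m' ⋅ m` is the composite when defined and `0` otherwise). -/
def CatAlg : Type := Mor C → ℂ

noncomputable instance : AddCommGroup (CatAlg C) := by unfold CatAlg; infer_instance
noncomputable instance : Module ℂ (CatAlg C) := by unfold CatAlg; infer_instance

variable {C}

noncomputable instance : Mul (CatAlg C) :=
  ⟨fun x y m => ∑ p : Mor C, ∑ q : Mor C, if pcomp p q = some m then x p * y q else 0⟩

lemma mul_def (x y : CatAlg C) (m : Mor C) :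
    (x * y) m = ∑ p : Mor C, ∑ q : Mor C, if pcomp p q = some m then x p * y q else 0 := rfl

noncomputable instance : One (CatAlg C) :=
  ⟨fun m => ∑ a : C, if m = idMor a then 1 else 0⟩

lemma one_def (m : Mor C) : (1 : CatAlg C) m = ∑ a : C, if m = idMor a then 1 else 0 := rfl

lemma one_apply_idMor (a : C) : (1 : CatAlg C) (idMor a) = 1 := by
  rw [one_def, Finset.sum_eq_single a]
  · simp
  · intro b _ hb
    rw [if_neg fun h => hb (idMor_injective h).symm]
  · simp

private lemma sum_option_eq (m : Mor C) (o : Option (Mor C)) (g : Mor C → Option (Mor C))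
    (T : ℂ) :
    (∑ s : Mor C, if o = some s ∧ g s = some m then T else 0) =
      if o.bind g = some m then T else 0 := by
  cases o with
  | none => simp
  | some s₀ =>
    rw [Finset.sum_eq_single s₀]
    · simp
    · intro b _ hb
      simp only [Option.some_inj]
      rw [if_neg]
      rintro ⟨h1, -⟩
      exact hb h1.symm
    · simp

private lemma swap4 (F : Mor C → Mor C → Mor C → Mor C → ℂ) :
    (∑ s : Mor C, ∑ r : Mor C, ∑ p : Mor C, ∑ q : Mor C, F s r p q) =
      ∑ p : Mor C, ∑ q : Mor C, ∑ r : Mor C, ∑ s : Mor C, F s r p q :=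
  calc (∑ s : Mor C, ∑ r : Mor C, ∑ p : Mor C, ∑ q : Mor C, F s r p q)
      = ∑ r : Mor C, ∑ s : Mor C, ∑ p : Mor C, ∑ q : Mor C, F s r p q := Finset.sum_comm
    _ = ∑ r : Mor C, ∑ p : Mor C, ∑ s : Mor C, ∑ q : Mor C, F s r p q :=
        Finset.sum_congr rfl fun r _ => Finset.sum_comm
    _ = ∑ r : Mor C, ∑ p : Mor C, ∑ q : Mor C, ∑ s : Mor C, F s r p q :=
        Finset.sum_congr rfl fun r _ => Finset.sum_congr rfl fun p _ => Finset.sum_comm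
    _ = ∑ p : Mor C, ∑ r : Mor C, ∑ q : Mor C, ∑ s : Mor C, F s r p q := Finset.sum_comm
    _ = ∑ p : Mor C, ∑ q : Mor C, ∑ r : Mor C, ∑ s : Mor C, F s r p q :=
        Finset.sum_congr rfl fun p _ => Finset.sum_comm

private lemma swap3 (F : Mor C → Mor C → Mor C → ℂ) :
    (∑ s : Mor C, ∑ q : Mor C, ∑ r : Mor C, F s q r) =
      ∑ q : Mor C, ∑ r : Mor C, ∑ s : Mor C, F s q r :=
  calc (∑ s : Mor C, ∑ q : Mor C, ∑ r : Mor C, F s q r)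
      = ∑ q : Mor C, ∑ s : Mor C, ∑ r : Mor C, F s q r := Finset.sum_comm
    _ = ∑ q : Mor C, ∑ r : Mor C, ∑ s : Mor C, F s q r :=
        Finset.sum_congr rfl fun q _ => Finset.sum_comm

private lemma mul_assoc' (x y z : CatAlg C) : x * y * z = x * (y * z) := by
  funext m
  rw [mul_def, mul_def]
  have lhs : (∑ s : Mor C, ∑ r : Mor C, if pcomp s r = some m then (x * y) s * z r else 0)
      = ∑ p : Mor C, ∑ q : Mor C, ∑ r : Mor C,
          if (pcomp p q).bind (fun s => pcomp s r) = some m then x p * y q * z r else 0 := by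
    have step : ∀ s r : Mor C, (if pcomp s r = some m then (x * y) s * z r else 0)
        = ∑ p : Mor C, ∑ q : Mor C,
            if pcomp p q = some s ∧ pcomp s r = some m then x p * y q * z r else 0 := by
      intro s r
      by_cases hsr : pcomp s r = some m
      · simp only [hsr, if_pos, and_true, mul_def, Finset.sum_mul, ite_mul, zero_mul]
      · simp [hsr]
    simp only [step]
    rw [swap4]
    refine Finset.sum_congr rfl fun p _ => Finset.sum_congr rfl fun q _ =>
      Finset.sum_congr rfl fun r _ => ?_
    exact sum_option_eq m (pcomp p q) (fun s => pcomp s r) _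
  have rhs : (∑ p : Mor C, ∑ s : Mor C, if pcomp p s = some m then x p * (y * z) s else 0)
      = ∑ p : Mor C, ∑ q : Mor C, ∑ r : Mor C,
          if (pcomp q r).bind (fun s => pcomp p s) = some m then x p * (y q * z r) else 0 := by
    have step : ∀ p s : Mor C, (if pcomp p s = some m then x p * (y * z) s else 0)
        = ∑ q : Mor C, ∑ r : Mor C,
            if pcomp q r = some s ∧ pcomp p s = some m then x p * (y q * z r) else 0 := by
      intro p s
      by_cases hps : pcomp p s = some m
      · simp only [hps, if_pos, and_true, mul_def, Finset.mul_sum, mul_ite, mul_zero]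
      · simp [hps]
    simp only [step]
    refine Finset.sum_congr rfl fun p _ => ?_
    rw [swap3]
    refine Finset.sum_congr rfl fun q _ => Finset.sum_congr rfl fun r _ => ?_
    exact sum_option_eq m (pcomp q r) (fun s => pcomp p s) _
  rw [lhs, rhs]
  refine Finset.sum_congr rfl fun p _ => Finset.sum_congr rfl fun q _ =>
    Finset.sum_congr rfl fun r _ => ?_
  rw [pcomp_assoc, mul_assoc]

private lemma one_mul' (x : CatAlg C) : 1 * x = x := by
  funext m
  rw [mul_def, Finset.sum_eq_single (idMor m.2.1)]
  · rw [Finset.sum_eq_single m]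
    · rw [if_pos (pcomp_idMor_left m), one_apply_idMor, one_mul]
    · intro q _ hq
      rw [if_neg fun h => hq (eq_of_pcomp_idMor_left h).1]
    · simp
  · intro p _ hp
    refine Finset.sum_eq_zero fun q _ => ?_
    split_ifs with h
    · have h1 : (1 : CatAlg C) p = 0 := by
        rw [one_def]
        refine Finset.sum_eq_zero fun a _ => ?_
        rw [if_neg]
        intro hpa
        subst hpa
        obtain ⟨hq, ha⟩ := eq_of_pcomp_idMor_left h
        exact hp (by rw [ha, hq])
      rw [h1, zero_mul]
    · rfl
  · simp

private lemma mul_one' (x : CatAlg C) : x * 1 = x := by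
  funext m
  rw [mul_def, Finset.sum_eq_single m]
  · rw [Finset.sum_eq_single (idMor m.1)]
    · rw [if_pos (pcomp_idMor_right m), one_apply_idMor, mul_one]
    · intro q _ hq
      split_ifs with h
      · have h1 : (1 : CatAlg C) q = 0 := by
          rw [one_def]
          refine Finset.sum_eq_zero fun a _ => ?_
          rw [if_neg]
          intro hqa
          subst hqa
          obtain ⟨hm, ha⟩ := eq_of_pcomp_idMor_right h
          exact hq (by rw [ha, hm])
        rw [h1, mul_zero]
      · rfl
    · simp
  · intro p _ hp
    refine Finset.sum_eq_zero fun q _ => ?_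
    split_ifs with h
    · have h1 : (1 : CatAlg C) q ≠ 0 → q = idMor q.1 := by
        intro hne
        rw [one_def] at hne
        by_contra hq
        refine hne (Finset.sum_eq_zero fun a _ => ?_)
        rw [if_neg]
        intro hqa
        apply hq
        rw [hqa]
        rfl
      by_cases hz : (1 : CatAlg C) q = 0
      · rw [hz, mul_zero]
      · exfalso
        have hqi := h1 hz
        rw [hqi] at h
        exact hp (eq_of_pcomp_idMor_right h).1
    · rfl
  · simp

private lemma left_distrib' (x y z : CatAlg C) : x * (y + z) = x * y + x * z := by
  funext m
  show (x * (y + z)) m = (x * y) m + (x * z) m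
  rw [mul_def, mul_def, mul_def, ← Finset.sum_add_distrib]
  refine Finset.sum_congr rfl fun p _ => ?_
  rw [← Finset.sum_add_distrib]
  refine Finset.sum_congr rfl fun q _ => ?_
  have : (y + z) q = y q + z q := rfl
  split_ifs with h <;> simp [this, mul_add]

private lemma right_distrib' (x y z : CatAlg C) : (x + y) * z = x * z + y * z := by
  funext m
  show ((x + y) * z) m = (x * z) m + (y * z) m
  rw [mul_def, mul_def, mul_def, ← Finset.sum_add_distrib]
  refine Finset.sum_congr rfl fun p _ => ?_
  rw [← Finset.sum_add_distrib]
  refine Finset.sum_congr rfl fun q _ => ?_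
  have : (x + y) p = x p + y p := rfl
  split_ifs with h <;> simp [this, add_mul]

private lemma zero_mul' (x : CatAlg C) : 0 * x = 0 := by
  funext m
  show (0 * x) m = 0
  rw [mul_def]
  refine Finset.sum_eq_zero fun p _ => Finset.sum_eq_zero fun q _ => ?_
  have : (0 : CatAlg C) p = 0 := rfl
  split_ifs <;> simp [this]

private lemma mul_zero' (x : CatAlg C) : x * 0 = 0 := by
  funext m
  show (x * 0) m = 0
  rw [mul_def]
  refine Finset.sum_eq_zero fun p _ => Finset.sum_eq_zero fun q _ => ?_
  have : (0 : CatAlg C) q = 0 := rfl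
  split_ifs <;> simp [this]

noncomputable instance : Ring (CatAlg C) where
  __ := (inferInstance : AddCommGroup (CatAlg C))
  mul := (· * ·)
  one := 1
  mul_assoc := mul_assoc'
  one_mul := one_mul'
  mul_one := mul_one'
  left_distrib := left_distrib'
  right_distrib := right_distrib'
  zero_mul := zero_mul'
  mul_zero := mul_zero'

noncomputable instance : Algebra ℂ (CatAlg C) :=
  Algebra.ofModule
    (fun r x y => by
      funext m
      show ((r • x) * y) m = r • ((x * y) m)
      rw [mul_def, mul_def, Finset.smul_sum]
      refine Finset.sum_congr rfl fun p _ => ?_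
      rw [Finset.smul_sum]
      refine Finset.sum_congr rfl fun q _ => ?_
      have : (r • x) p = r • x p := rfl
      split_ifs <;> simp [this, smul_mul_assoc, mul_assoc])
    (fun r x y => by
      funext m
      show (x * (r • y)) m = r • ((x * y) m)
      rw [mul_def, mul_def, Finset.smul_sum]
      refine Finset.sum_congr rfl fun p _ => ?_
      rw [Finset.smul_sum]
      refine Finset.sum_congr rfl fun q _ => ?_
      have : (r • y) q = r • y q := rfl
      split_ifs <;> simp [this, mul_smul_comm, mul_left_comm])

end CatAlgebra

/-- The objects of the category `E_n`: subsets of `{1, …, n}`. -/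
def EObj (n : ℕ) : Type := Finset (Fin n)

/-- The underlying subset of an object of `E_n`. -/
def EObj.toFinset {n : ℕ} (X : EObj n) : Finset (Fin n) := X

/-- The category `E_n` of all surjections between subsets of `{1, …, n}`:
objects are the subsets of `{1, …, n}` and morphisms are the surjective
(total) functions between them. -/
instance (n : ℕ) : CategoryTheory.Category (EObj n) where
  Hom X Y := {f : {x // x ∈ X.toFinset} → {y // y ∈ Y.toFinset} // Function.Surjective f}
  id X := ⟨id, Function.surjective_id⟩
  comp f g := ⟨g.1 ∘ f.1, g.2.comp f.2⟩

instance (n : ℕ) : Fintype (EObj n) := inferInstanceAs (Fintype (Finset (Fin n)))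
instance (n : ℕ) : DecidableEq (EObj n) := inferInstanceAs (DecidableEq (Finset (Fin n)))
instance (n : ℕ) (X Y : EObj n) : Fintype (X ⟶ Y) := by
  show Fintype {f : _ → _ // Function.Surjective f}
  infer_instance
instance (n : ℕ) (X Y : EObj n) : DecidableEq (X ⟶ Y) := by
  show DecidableEq {f : _ → _ // Function.Surjective f}
  infer_instance

/-- The monoid of all partial functions on an `n`-element set, encoded as the
maps of `Option (Fin n)` preserving the base point `none`; multiplication is
composition of partial functions (from right to left): `(f * g) x = f (g x)`. -/
def PTMonoid (n : ℕ) : Type := {f : Option (Fin n) → Option (Fin n) // f none = none}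

instance (n : ℕ) : Monoid (PTMonoid n) where
  one := ⟨id, rfl⟩
  mul f g := ⟨f.1 ∘ g.1, by simp [g.2, f.2]⟩
  mul_assoc f g h := rfl
  one_mul f := rfl
  mul_one f := rfl

/-!
Send a partial function `f` to the sum of its restrictions `g ≤ f`, each read as the surjection
`dom g → im g` of `E_n`. This is multiplicative because a restriction `h` of `f * g` factors in
exactly one way as `p * q` with `p ≤ f`, `q ≤ g` and `im q = dom p`, namely through
`q = g|_{dom h}` and `p = f|_{im q}`. The linear extension `ℂPT_n → ℂE_n` is unitriangular for
the restriction order, hence injective, and both algebras have dimension `|PT_n|`.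
-/

theorem Finsupp.eq_zero_of_forall_sum_ge_eq_zero {α M : Type*} [PartialOrder α] [DecidableLE α]
    [AddCommMonoid M] (x : α →₀ M) (h : ∀ a, ∑ b ∈ x.support with a ≤ b, x b = 0) :
    x = 0 := by
  by_contra hx
  obtain ⟨a, ha⟩ := Finset.exists_maximal (Finsupp.support_nonempty_iff.mpr hx)
  have hsingle : {b ∈ x.support | a ≤ b} = {a} := by
    ext b
    simp only [Finset.mem_filter, Finset.mem_singleton]
    exact ⟨fun ⟨hb, hab⟩ => ha.eq_of_ge hb hab, by rintro rfl; exact ⟨ha.prop, le_rfl⟩⟩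
  exact Finsupp.mem_support_iff.mp ha.prop (by simpa [hsingle] using h a)

namespace CatAlgebra

variable {C : Type} [Category.{0} C] [Fintype C] [∀ a b : C, Fintype (a ⟶ b)]
  [DecidableEq C] [∀ a b : C, DecidableEq (a ⟶ b)]

lemma one_apply (m : Mor C) : (1 : CatAlg C) m = if m = idMor m.1 then 1 else 0 := by
  rw [one_def, Finset.sum_eq_single m.1
    (fun a _ ha => if_neg fun h => ha (congrArg Sigma.fst h).symm) (by simp)]

lemma sum_apply {ι : Type*} (s : Finset ι) (x : ι → CatAlg C) (m : Mor C) :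
    (∑ i ∈ s, x i) m = ∑ i ∈ s, x i m :=
  Finset.sum_apply (M := fun _ => ℂ) m s x

lemma smul_apply (c : ℂ) (x : CatAlg C) (m : Mor C) : (c • x) m = c * x m := rfl

end CatAlgebra

namespace PTMonoid

variable {n : ℕ}

instance : Fintype (PTMonoid n) := by unfold PTMonoid; infer_instance
instance : DecidableEq (PTMonoid n) := by unfold PTMonoid; infer_instance

lemma mul_apply (f g : PTMonoid n) (o : Option (Fin n)) : (f * g).1 o = f.1 (g.1 o) := rfl

lemma mul_apply_eq_some {f g : PTMonoid n} {a b : Fin n} :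
    (f * g).1 (some a) = some b ↔ ∃ c, g.1 (some a) = some c ∧ f.1 (some c) = some b := by
  rw [mul_apply]
  cases g.1 (some a) <;> simp [f.2]

instance : PartialOrder (PTMonoid n) where
  le g f := ∀ a b, g.1 (some a) = some b → f.1 (some a) = some b
  le_refl _ _ _ := id
  le_trans _ _ _ hgf hfh a b h := hfh a b (hgf a b h)
  le_antisymm g f hgf hfg := by
    refine Subtype.ext (funext fun o => ?_)
    obtain _ | a := o
    · exact g.2.trans f.2.symm
    · cases hg : g.1 (some a) with
      | some b => exact (hgf a b hg).symm
      | none => cases hf : f.1 (some a) with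
        | none => rfl
        | some b => simpa [hg] using hfg a b hf

instance : DecidableRel (α := PTMonoid n) (· ≤ ·) := fun g f =>
  inferInstanceAs (Decidable (∀ a b, g.1 (some a) = some b → f.1 (some a) = some b))

instance : MulLeftMono (PTMonoid n) where
  elim h g f hgf a b := by
    simp only [mul_apply_eq_some]
    exact fun ⟨c, hg, hh⟩ => ⟨c, hgf a c hg, hh⟩

instance : MulRightMono (PTMonoid n) where
  elim h g f hgf a b := by
    simp only [Function.swap, mul_apply_eq_some]
    exact fun ⟨c, hh, hg⟩ => ⟨c, hh, hgf c b hg⟩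

def dom (f : PTMonoid n) : Finset (Fin n) := Finset.univ.filter fun a => (f.1 (some a)).isSome

def im (f : PTMonoid n) : Finset (Fin n) := Finset.univ.filter fun b => ∃ a, f.1 (some a) = some b

lemma mem_dom {f : PTMonoid n} {a : Fin n} : a ∈ dom f ↔ ∃ b, f.1 (some a) = some b := by
  simp [dom, Option.isSome_iff_exists]

lemma mem_im {f : PTMonoid n} {b : Fin n} : b ∈ im f ↔ ∃ a, f.1 (some a) = some b := by
  simp [im]

lemma notMem_dom {f : PTMonoid n} {a : Fin n} : a ∉ dom f ↔ f.1 (some a) = none := by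
  simp [dom]

def restrict (f : PTMonoid n) (X : Finset (Fin n)) : PTMonoid n :=
  ⟨fun o => o.bind fun a => if a ∈ X then f.1 (some a) else none, rfl⟩

lemma restrict_apply (f : PTMonoid n) (X : Finset (Fin n)) (a : Fin n) :
    (restrict f X).1 (some a) = if a ∈ X then f.1 (some a) else none := rfl

lemma restrict_le (f : PTMonoid n) (X : Finset (Fin n)) : restrict f X ≤ f := by
  intro a b
  rw [restrict_apply]
  split_ifs <;> simp

lemma dom_restrict {f : PTMonoid n} {X : Finset (Fin n)} (hX : X ⊆ dom f) :
    dom (restrict f X) = X := by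
  ext a
  rw [mem_dom, restrict_apply]
  by_cases ha : a ∈ X
  · simpa [ha] using mem_dom.mp (hX ha)
  · simp [ha]

lemma eq_restrict_dom_of_le {g f : PTMonoid n} (h : g ≤ f) : g = restrict f (dom g) := by
  refine le_antisymm (fun a b hg => ?_) (fun a b hr => ?_)
  · rw [restrict_apply, if_pos (mem_dom.mpr ⟨b, hg⟩), h a b hg]
  · rw [restrict_apply] at hr
    split_ifs at hr with ha
    obtain ⟨c, hc⟩ := mem_dom.mp ha
    rw [hc, ← hr, h a c hc]

lemma eq_of_le_of_dom_subset {g f : PTMonoid n} (h : g ≤ f) (hdom : dom f ⊆ dom g) : g = f := by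
  refine le_antisymm h fun a b hf => ?_
  obtain ⟨c, hc⟩ := mem_dom.mp (hdom (mem_dom.mpr ⟨b, hf⟩))
  rw [hc, ← hf, h a c hc]

lemma le_iff_eq_restrict_dom {g f : PTMonoid n} : g ≤ f ↔ g = restrict f (dom g) :=
  ⟨eq_restrict_dom_of_le, fun h => h ▸ restrict_le f _⟩

lemma dom_mul_of_im_subset {p q : PTMonoid n} (h : im q ⊆ dom p) : dom (p * q) = dom q := by
  ext a
  simp only [mem_dom, mul_apply_eq_some]
  refine ⟨fun ⟨_, c, hc, _⟩ => ⟨c, hc⟩, fun ⟨c, hc⟩ => ?_⟩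
  obtain ⟨b, hb⟩ := mem_dom.mp (h (mem_im.mpr ⟨a, hc⟩))
  exact ⟨b, c, hc, hb⟩

lemma im_restrict_dom_subset {f g h : PTMonoid n} (hfg : h ≤ f * g) :
    im (restrict g (dom h)) ⊆ dom f := fun c hc => by
  obtain ⟨a, ha⟩ := mem_im.mp hc
  rw [restrict_apply] at ha
  split_ifs at ha with had
  obtain ⟨b, hb⟩ := mem_dom.mp had
  obtain ⟨c', hc', hfc⟩ := mul_apply_eq_some.mp (hfg a b hb)
  exact mem_dom.mpr ⟨b, Option.some_injective _ (ha.symm.trans hc') ▸ hfc⟩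

lemma restrict_mul_restrict_eq {f g h : PTMonoid n} (hfg : h ≤ f * g) :
    restrict f (im (restrict g (dom h))) * restrict g (dom h) = h := by
  refine (eq_of_le_of_dom_subset (fun a z hz => ?_) fun a ha => ?_).symm
  · obtain ⟨c, hgc, hfc⟩ := mul_apply_eq_some.mp (hfg a z hz)
    have hqc : (restrict g (dom h)).1 (some a) = some c := by
      rw [restrict_apply, if_pos (mem_dom.mpr ⟨z, hz⟩), hgc]
    rw [mul_apply_eq_some]
    exact ⟨c, hqc, by rw [restrict_apply, if_pos (mem_im.mpr ⟨a, hqc⟩), hfc]⟩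
  · obtain ⟨z, hz⟩ := mem_dom.mp ha
    obtain ⟨c, hqc, -⟩ := mul_apply_eq_some.mp hz
    rw [restrict_apply] at hqc
    split_ifs at hqc with had
    exact had

lemma factor_iff {f g h p q : PTMonoid n} :
    p ≤ f ∧ q ≤ g ∧ im q = dom p ∧ h = p * q ↔
      h ≤ f * g ∧ q = restrict g (dom h) ∧ p = restrict f (im q) := by
  constructor
  · rintro ⟨hpf, hqg, hqp, rfl⟩
    refine ⟨mul_le_mul' hpf hqg, ?_, ?_⟩
    · rw [dom_mul_of_im_subset hqp.subset]
      exact eq_restrict_dom_of_le hqg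
    · rw [hqp]
      exact eq_restrict_dom_of_le hpf
  · rintro ⟨hfg, rfl, rfl⟩
    exact ⟨restrict_le f _, restrict_le g _, (dom_restrict (im_restrict_dom_subset hfg)).symm,
      (restrict_mul_restrict_eq hfg).symm⟩

open CatAlgebra

def ofMor (m : Mor (EObj n)) : PTMonoid n :=
  ⟨fun o => o.bind fun a => if h : a ∈ m.1.toFinset then some (m.2.2.1 ⟨a, h⟩).1 else none,
    rfl⟩

lemma ofMor_apply (m : Mor (EObj n)) (a : Fin n) :
    (ofMor m).1 (some a) = if h : a ∈ m.1.toFinset then some (m.2.2.1 ⟨a, h⟩).1 else none :=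
  rfl

lemma dom_ofMor (m : Mor (EObj n)) : dom (ofMor m) = m.1.toFinset := by
  ext a
  by_cases ha : a ∈ m.1.toFinset <;> simp [mem_dom, ofMor_apply, ha]

lemma im_ofMor (m : Mor (EObj n)) : im (ofMor m) = m.2.1.toFinset := by
  ext b
  simp only [mem_im, ofMor_apply]
  constructor
  · rintro ⟨a, ha⟩
    split_ifs at ha with h
    exact Option.some_injective _ ha ▸ (m.2.2.1 ⟨a, h⟩).2
  · intro hb
    obtain ⟨⟨a, ha⟩, hab⟩ := m.2.2.2 ⟨b, hb⟩
    exact ⟨a, by rw [dif_pos ha, hab]⟩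

lemma ofMor_injective : Function.Injective (ofMor (n := n)) := by
  rintro ⟨X, Y, u⟩ ⟨X', Y', u'⟩ h
  obtain rfl : X = X' := (dom_ofMor _).symm.trans ((congrArg dom h).trans (dom_ofMor _))
  obtain rfl : Y = Y' := (im_ofMor _).symm.trans ((congrArg im h).trans (im_ofMor _))
  obtain rfl : u = u' := Subtype.ext <| funext fun ⟨a, ha⟩ => Subtype.ext <| by
    simpa [ofMor_apply, ha] using congrFun (congrArg Subtype.val h) (some a)
  rfl

lemma ofMor_surjective : Function.Surjective (ofMor (n := n)) := by
  intro f
  have hdom (a : {a // a ∈ dom f}) : (f.1 (some a.1)).isSome := (Finset.mem_filter.mp a.2).2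
  refine ⟨⟨dom f, im f, fun a => ⟨(f.1 (some a.1)).get (hdom a), ?_⟩, fun b => ?_⟩, ?_⟩
  · exact mem_im.mpr ⟨a.1, (Option.some_get _).symm⟩
  · obtain ⟨a, ha⟩ := mem_im.mp b.2
    exact ⟨⟨a, mem_dom.mpr ⟨b.1, ha⟩⟩, Subtype.ext (Option.get_of_eq_some _ ha)⟩
  · refine Subtype.ext (funext fun o => ?_)
    obtain _ | a := o
    · exact f.2.symm
    · by_cases ha : a ∈ dom f
      · exact (ofMor_apply _ a).trans ((dif_pos ha).trans (Option.some_get _))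
      · exact (ofMor_apply _ a).trans ((dif_neg ha).trans (notMem_dom.mp ha).symm)

noncomputable def morEquiv (n : ℕ) : Mor (EObj n) ≃ PTMonoid n :=
  Equiv.ofBijective ofMor ⟨ofMor_injective, ofMor_surjective⟩

lemma ofMor_idMor (X : EObj n) : ofMor (idMor X) = restrict 1 X.toFinset := by
  refine Subtype.ext (funext fun o => ?_)
  obtain _ | a := o
  · rfl
  · by_cases ha : a ∈ X.toFinset
    · simp [ofMor_apply, restrict_apply, idMor, ha]
      rfl
    · simp [ofMor_apply, restrict_apply, idMor, ha]

lemma pcomp_eq_some_iff {p q m : Mor (EObj n)} :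
    pcomp p q = some m ↔ im (ofMor q) = dom (ofMor p) ∧ ofMor m = ofMor p * ofMor q := by
  have hcod : im (ofMor q) = dom (ofMor p) ↔ q.2.1 = p.1 := by
    rw [im_ofMor, dom_ofMor]
    rfl
  have hcomp (h : q.2.1 = p.1) :
      ofMor ⟨q.1, p.2.1, (q.2.2 ≫ eqToHom h) ≫ p.2.2⟩ = ofMor p * ofMor q := by
    obtain ⟨X, Y, u⟩ := p
    obtain ⟨X', Y', v⟩ := q
    obtain rfl : Y' = X := h
    refine Subtype.ext (funext fun o => ?_)
    obtain _ | a := o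
    · rfl
    · by_cases ha : a ∈ X'.toFinset <;> simp [ofMor_apply, mul_apply, ha] <;> rfl
  rw [hcod, pcomp]
  split_ifs with h
  · rw [Option.some_inj, ← ofMor_injective.eq_iff, hcomp h, eq_comm]
    exact (and_iff_right h).symm
  · simp [h]

lemma ofMor_le_one_iff (m : Mor (EObj n)) : ofMor m ≤ 1 ↔ m = idMor m.1 := by
  rw [le_iff_eq_restrict_dom, dom_ofMor, ← ofMor_idMor, ofMor_injective.eq_iff]

def restrictionSum (f : PTMonoid n) : CatAlg (EObj n) := fun m => if ofMor m ≤ f then 1 else 0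

lemma restrictionSum_apply (f : PTMonoid n) (m : Mor (EObj n)) :
    restrictionSum f m = if ofMor m ≤ f then 1 else 0 := rfl

lemma restrictionSum_one : restrictionSum (1 : PTMonoid n) = 1 :=
  funext fun m => by simp only [restrictionSum_apply, one_apply, ofMor_le_one_iff]

lemma restrictionSum_mul (f g : PTMonoid n) :
    restrictionSum (f * g) = restrictionSum f * restrictionSum g := by
  funext m
  symm
  calc (restrictionSum f * restrictionSum g) m
      = ∑ p : Mor (EObj n), ∑ q : Mor (EObj n),
          if ofMor p ≤ f ∧ ofMor q ≤ g ∧ im (ofMor q) = dom (ofMor p) ∧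
            ofMor m = ofMor p * ofMor q then 1 else 0 := by
        simp only [mul_def, restrictionSum_apply, pcomp_eq_some_iff]
        congr! 2 with p _ q _
        split_ifs <;> simp_all
    _ = ∑ p : PTMonoid n, ∑ q : PTMonoid n,
          if p ≤ f ∧ q ≤ g ∧ im q = dom p ∧ ofMor m = p * q then 1 else 0 :=
        Fintype.sum_equiv (morEquiv n) _ _ fun p =>
          Fintype.sum_equiv (morEquiv n) _ _ fun q => rfl
    _ = ∑ p : PTMonoid n, ∑ q : PTMonoid n,
          if ofMor m ≤ f * g ∧ q = restrict g (dom (ofMor m)) ∧ p = restrict f (im q)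
            then 1 else 0 := by
        simp only [factor_iff]
    _ = restrictionSum (f * g) m := by
        by_cases h : ofMor m ≤ f * g
        · simp only [restrictionSum_apply, h, true_and, if_true, ite_and]
          rw [Finset.sum_comm]
          simp
        · simp [restrictionSum_apply, h]

noncomputable def restrictionSumHom (n : ℕ) : PTMonoid n →* CatAlg (EObj n) :=
  ⟨⟨restrictionSum, restrictionSum_one⟩, restrictionSum_mul⟩

lemma lift_restrictionSumHom_apply (x : MonoidAlgebra ℂ (PTMonoid n)) (m : Mor (EObj n)) :
    MonoidAlgebra.lift ℂ (CatAlg (EObj n)) (PTMonoid n) (restrictionSumHom n) x m =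
      ∑ f ∈ x.coeff.support with ofMor m ≤ f, x.coeff f := by
  rw [MonoidAlgebra.lift_apply, Finsupp.sum]
  simp only [CatAlgebra.sum_apply, CatAlgebra.smul_apply, restrictionSumHom, MonoidHom.coe_mk,
    OneHom.coe_mk, restrictionSum_apply, mul_ite, mul_one, mul_zero, Finset.sum_filter]

lemma lift_restrictionSumHom_injective : Function.Injective
    (MonoidAlgebra.lift ℂ (CatAlg (EObj n)) (PTMonoid n) (restrictionSumHom n)) := by
  refine (injective_iff_map_eq_zero _).mpr fun x hx => MonoidAlgebra.ext ?_
  refine Finsupp.eq_zero_of_forall_sum_ge_eq_zero x.coeff fun f => ?_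
  obtain ⟨m, rfl⟩ := ofMor_surjective f
  rw [← lift_restrictionSumHom_apply, hx]
  rfl

lemma finrank_monoidAlgebra_eq_finrank_catAlg :
    Module.finrank ℂ (MonoidAlgebra ℂ (PTMonoid n)) = Module.finrank ℂ (CatAlg (EObj n)) := by
  rw [(MonoidAlgebra.coeffLinearEquiv ℂ).finrank_eq, Module.finrank_finsupp_self]
  exact ((Module.finrank_pi ℂ).trans (Fintype.card_congr (morEquiv n))).symm

end PTMonoid

open CatAlgebra in
/-- There is an isomorphism of `ℂ`-algebras between the complex monoid algebra of the
monoid `PT_n` of all partial functions on an `n`-element set and the complex category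
algebra of the category `E_n` of all surjections between subsets of an `n`-element set. -/
theorem monoidAlgebra_PT_iso_catAlg_E (n : ℕ) :
    Nonempty (MonoidAlgebra ℂ (PTMonoid n) ≃ₐ[ℂ] CatAlg (EObj n)) := by
  let L := MonoidAlgebra.lift ℂ (CatAlg (EObj n)) (PTMonoid n) (PTMonoid.restrictionSumHom n)
  have : FiniteDimensional ℂ (MonoidAlgebra ℂ (PTMonoid n)) :=
    Module.Finite.equiv (MonoidAlgebra.coeffLinearEquiv ℂ).symm
  have : FiniteDimensional ℂ (CatAlg (EObj n)) :=
    inferInstanceAs (FiniteDimensional ℂ (Mor _ → ℂ))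
  have hinj : Function.Injective L.toLinearMap := PTMonoid.lift_restrictionSumHom_injective
  exact ⟨AlgEquiv.ofBijective L ⟨hinj, (LinearMap.injective_iff_surjective_of_finrank_eq_finrank
    PTMonoid.finrank_monoidAlgebra_eq_finrank_catAlg).mp hinj⟩⟩
end

section
/- Let k ≥ 2 and let κ₂ : {1,…,k+2} → {1,…,k} be the surjection with κ₂(i) = i for i ≤ k−1, κ₂(k) = k−1 and κ₂(k+1) = κ₂(k+2) = k. The stabilizer of κ₂ under the action of S_k × S_{k+2} given by (σ,π)·f = σ ∘ f ∘ π⁻¹ is K₂ = { (ρ·ν(τ), ρτ) : ρ ∈ S_{k−2}, τ ∈ D₄ }, where S_{k−2} is embedded in S_k and in S_{k+2} as the permutations fixing all points above k−2, D₄ is the dihedral subgroup of order 8 of the permutations of {k−1,k,k+1,k+2} generated (under the identification of {k−1,k,k+1,k+2} with {1,2,3,4}) by (1 2) and (1 3)(2 4), and ν : D₄ → S₂ is the group homomorphism sending (1 2) to the identity and (1 3)(2 4) to the transposition, with S₂ identified with the permutations of {k−1,k} inside S_k. In particular K₂ ≅ S_{k−2} × D₄. -/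
open scoped Classical

noncomputable section

open Equiv

section PermEmbed

/-- Conjugating permutations by an equivalence, as an isomorphism of groups. -/
def permCongrMulEquiv {α β : Type} (e : α ≃ β) : Perm α ≃* Perm β :=
  { Equiv.permCongr e with
    map_mul' := fun f g => by
      ext x
      simp [Equiv.permCongr_apply] }

/-- Transport of permutation groups along an equality of cardinalities. -/
def castPermHom {m n : ℕ} (h : m = n) : Perm (Fin m) →* Perm (Fin n) :=
  (permCongrMulEquiv (finCongr h)).toMonoidHom

/-- The standard embedding of `S_a × S_b` into `S_{a+b}`, where `S_a` permutes the
first `a` points and `S_b` permutes the last `b` points. -/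
def embPair (a b : ℕ) : Perm (Fin a) × Perm (Fin b) →* Perm (Fin (a + b)) :=
  (permCongrMulEquiv finSumFinEquiv).toMonoidHom.comp (Equiv.Perm.sumCongrHom (Fin a) (Fin b))

end PermEmbed

section Surj

/-- The set of surjections from `{1, …, r}` onto `{1, …, k}`. -/
def SurjFun (r k : ℕ) : Type := {f : Fin r → Fin k // Function.Surjective f}

variable {r k : ℕ}

instance : SMul (Perm (Fin k) × Perm (Fin r)) (SurjFun r k) :=
  ⟨fun p f => ⟨fun x => p.1 (f.1 (p.2⁻¹ x)), by
    intro y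
    obtain ⟨x, hx⟩ := f.2 (p.1⁻¹ y)
    exact ⟨p.2 x, by simp [hx]⟩⟩⟩

lemma surj_smul_def (p : Perm (Fin k) × Perm (Fin r)) (f : SurjFun r k) (x : Fin r) :
    (p • f).1 x = p.1 (f.1 (p.2⁻¹ x)) := rfl

/-- The action of `S_k × S_r` on the surjections `{1,…,r} ↠ {1,…,k}` given by
`(σ, π) ⬝ f = σ ∘ f ∘ π⁻¹`. -/
instance : MulAction (Perm (Fin k) × Perm (Fin r)) (SurjFun r k) where
  one_smul f := Subtype.ext (funext fun x => by simp [surj_smul_def])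
  mul_smul p q f := Subtype.ext (funext fun x => by
    simp [surj_smul_def, Perm.mul_apply, mul_inv_rev])

/-- The multiset of sizes of the kernel classes of a surjection `f : {1,…,r} ↠ {1,…,k}`,
i.e. the integer partition `I(ker f)`. -/
def kernelSizes (f : Fin r → Fin k) : Multiset ℕ :=
  Finset.univ.val.map fun y => (Finset.univ.filter fun x => f x = y).card

lemma kernelSizes_smul (p : Perm (Fin k) × Perm (Fin r)) (f : SurjFun r k) :
    kernelSizes (p • f).1 = kernelSizes f.1 := by
  obtain ⟨σ, π⟩ := p
  have hfib : ∀ y : Fin k,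
      (Finset.univ.filter fun x => ((σ, π) • f).1 x = y) =
        (Finset.univ.filter fun x => f.1 x = σ⁻¹ y).map π.toEmbedding := by
    intro y
    ext x
    simp only [Finset.mem_filter, Finset.mem_map, Finset.mem_univ, true_and,
      Equiv.coe_toEmbedding, surj_smul_def]
    constructor
    · intro h
      refine ⟨π⁻¹ x, ?_, by simp⟩
      rw [← h]
      simp
    · rintro ⟨x', hx', rfl⟩
      simp [hx']
  have : kernelSizes ((σ, π) • f).1 =
      Finset.univ.val.map fun y => (Finset.univ.filter fun x => f.1 x = σ⁻¹ y).card := by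
    unfold kernelSizes
    refine Multiset.map_congr rfl fun y _ => ?_
    rw [hfib y, Finset.card_map]
  rw [this]
  unfold kernelSizes
  have huniv : Finset.univ.val.map (⇑σ⁻¹) = Finset.univ.val := by
    have := congrArg Finset.val (Finset.map_univ_equiv σ⁻¹)
    simpa [Finset.map] using this
  calc (Finset.univ.val.map fun y => (Finset.univ.filter fun x => f.1 x = σ⁻¹ y).card)
      = (Finset.univ.val.map (⇑σ⁻¹)).map
          (fun z => (Finset.univ.filter fun x => f.1 x = z).card) := by
        rw [Multiset.map_map]
        rfl
    _ = Finset.univ.val.map (fun z => (Finset.univ.filter fun x => f.1 x = z).card) := by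
        rw [huniv]

end Surj
/-- The canonical surjection `κ₂ : {1,…,k+2} → {1,…,k}` which is the identity on
`{1,…,k-1}` and sends `k` to `k-1` and `k+1, k+2` to `k` (written here `0`-indexed). -/
def kappa2 (k : ℕ) (hk : 2 ≤ k) : SurjFun (k + 2) k :=
  ⟨fun i => if h : i.val < k - 1 then ⟨i.val, by omega⟩
    else if i.val = k - 1 then ⟨k - 2, by omega⟩ else ⟨k - 1, by omega⟩, by
    intro y
    by_cases hy : y.val = k - 1
    · refine ⟨⟨k, by omega⟩, ?_⟩
      apply Fin.ext
      simp only []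
      split_ifs with h1 h2
      · (try simp at h1)
        omega
      · (try simp at h2)
        omega
      · simp
        omega
    · refine ⟨⟨y.val, by omega⟩, ?_⟩
      have h1 : y.val < k - 1 := by
        have := y.isLt
        omega
      apply Fin.ext
      simp [h1]⟩

/-- The transposition `(1 2)` of `S₄` (`0`-indexed: `(0 1)`). -/
def d4a : Perm (Fin 4) := Equiv.swap 0 1

/-- The double transposition `(1 3)(2 4)` of `S₄` (`0`-indexed: `(0 2)(1 3)`). -/
def d4b : Perm (Fin 4) := Equiv.swap 0 2 * Equiv.swap 1 3

/-- The dihedral subgroup of order 8 of `S₄` generated by `(1 2)` and `(1 3)(2 4)`. -/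
def D4 : Subgroup (Perm (Fin 4)) := Subgroup.closure {d4a, d4b}

/-- The four "corner-keeping" elements `id, (1 2), (3 4), (1 2)(3 4)` of `D₄`. -/
def D4pos : Finset (Perm (Fin 4)) :=
  {1, Equiv.swap 0 1, Equiv.swap 2 3, Equiv.swap 0 1 * Equiv.swap 2 3}

/-- The explicit list of the eight elements of `D₄`, as words in the generators. -/
def D4Finset : Finset (Perm (Fin 4)) :=
  {1, d4a, d4b, d4a * d4b, d4b * d4a, d4a * d4b * d4a, d4b * d4a * d4b, d4a * d4b * d4a * d4b}

lemma mem_D4_iff (x : Perm (Fin 4)) : x ∈ D4 ↔ x ∈ D4Finset := by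
  have ha : d4a ∈ D4 := Subgroup.subset_closure (by simp)
  have hb : d4b ∈ D4 := Subgroup.subset_closure (by simp)
  constructor
  · intro hx
    have hmul : ∀ a ∈ D4Finset, ∀ b ∈ D4Finset, a * b ∈ D4Finset := by decide
    have hinv : ∀ a ∈ D4Finset, a⁻¹ ∈ D4Finset := by decide
    have hone : (1 : Perm (Fin 4)) ∈ D4Finset := by decide
    have hle : D4 ≤
        { carrier := ↑D4Finset
          one_mem' := Finset.mem_coe.mpr hone
          mul_mem' := fun {a b} ha hb => Finset.mem_coe.mpr
            (hmul a (Finset.mem_coe.mp ha) b (Finset.mem_coe.mp hb))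
          inv_mem' := fun {a} ha => Finset.mem_coe.mpr (hinv a (Finset.mem_coe.mp ha))
          : Subgroup (Perm (Fin 4))} := by
      rw [D4]
      apply (Subgroup.closure_le _).mpr
      intro y hy
      rcases hy with h | h
      · subst h
        exact Finset.mem_coe.mpr (by decide : d4a ∈ D4Finset)
      · rw [Set.mem_singleton_iff] at h
        subst h
        exact Finset.mem_coe.mpr (by decide : d4b ∈ D4Finset)
    exact hle hx
  · intro hx
    simp only [D4Finset, Finset.mem_insert, Finset.mem_singleton] at hx
    rcases hx with h | h | h | h | h | h | h | h <;> subst h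
    · exact one_mem _
    · exact ha
    · exact hb
    · exact mul_mem ha hb
    · exact mul_mem hb ha
    · exact mul_mem (mul_mem ha hb) ha
    · exact mul_mem (mul_mem hb ha) hb
    · exact mul_mem (mul_mem (mul_mem ha hb) ha) hb

/-- The function underlying the homomorphism `ν : D₄ → S₂`, sending the four
corner-keeping elements to the identity and the other four to the transposition. -/
def nuFun (p : Perm (Fin 4)) : Perm (Fin 2) := if p ∈ D4pos then 1 else Equiv.swap 0 1

private lemma nuFun_mul : ∀ x ∈ D4Finset, ∀ y ∈ D4Finset, nuFun (x * y) = nuFun x * nuFun y := by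
  decide

/-- The homomorphism `ν : D₄ → S₂` with `ν((1 2)) = id` and `ν((1 3)(2 4)) = (1 2)`. -/
def nuHom : ↥D4 →* Perm (Fin 2) where
  toFun g := nuFun g.1
  map_one' := by decide
  map_mul' g h := nuFun_mul g.1 ((mem_D4_iff _).mp g.2) h.1 ((mem_D4_iff _).mp h.2)

/-!
A point of `{1,…,k+2}` is alone in its fibre of `κ₂` exactly when it is `≤ k-2`, and a pair
`(σ, π)` in the stabilizer maps fibres to fibres, so `π` preserves `{1,…,k-2}` and agrees with `σ`
there. On the last four points `κ₂` is `j ↦ ⌊j/2⌋`, and the permutations of them compatible with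
it are those preserving the blocks `{1,2}, {3,4}`: this is `D₄`, and `ν` records the induced
permutation of the blocks.
-/

section SumMap

variable {α β γ : Type*}

theorem Sum.eq_inl_of_map_id_eq_inl {g : β → γ} {x : α ⊕ β} {a : α}
    (h : Sum.map id g x = Sum.inl a) : x = Sum.inl a := by
  cases x <;> simp_all

theorem Equiv.Perm.mapsTo_range_inl_of_sumMap_comm {q : β → γ}
    (hq : ∀ b, ∃ b', b' ≠ b ∧ q b' = q b) {σ : Perm (α ⊕ γ)} {π : Perm (α ⊕ β)}
    (h : ∀ x, σ (Sum.map id q x) = Sum.map id q (π x)) :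
    Set.MapsTo π (Set.range Sum.inl) (Set.range Sum.inl) := by
  rintro _ ⟨a, rfl⟩
  rcases hπa : π (Sum.inl a) with a' | b
  · exact ⟨a', rfl⟩
  · obtain ⟨b', hb'b, hqb⟩ := hq b
    have hfib : Sum.map id q (π.symm (Sum.inr b')) = Sum.inl a := σ.injective <| by
      rw [h, π.apply_symm_apply, Sum.map_inr, hqb, ← Sum.map_inr id, ← hπa, ← h, Sum.map_inl,
        id]
    have := Sum.eq_inl_of_map_id_eq_inl hfib
    rw [π.symm_apply_eq, hπa, Sum.inr.injEq] at this
    exact absurd this hb'b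

theorem Equiv.Perm.sumMap_comm_iff [Finite α] [Finite β] [Finite γ] {q : β → γ}
    (hq : ∀ b, ∃ b', b' ≠ b ∧ q b' = q b) (σ : Perm (α ⊕ γ)) (π : Perm (α ⊕ β)) :
    (∀ x, σ (Sum.map id q x) = Sum.map id q (π x)) ↔
      ∃ (ρ : Perm α) (s : Perm γ) (t : Perm β),
        σ = Perm.sumCongr ρ s ∧ π = Perm.sumCongr ρ t ∧ ∀ b, s (q b) = q (t b) := by
  constructor
  · intro h
    obtain ⟨⟨ρ, t⟩, rfl⟩ :=
      Perm.mem_sumCongrHom_range_of_perm_mapsTo_inl (mapsTo_range_inl_of_sumMap_comm hq h)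
    have hσ : Set.MapsTo σ (Set.range Sum.inl) (Set.range Sum.inl) := by
      rintro _ ⟨a, rfl⟩
      exact ⟨ρ a, by simpa using (h (Sum.inl a)).symm⟩
    obtain ⟨⟨ρ', s⟩, rfl⟩ := Perm.mem_sumCongrHom_range_of_perm_mapsTo_inl hσ
    have hρ : ρ' = ρ := Equiv.ext fun a => by simpa using h (Sum.inl a)
    exact ⟨ρ, s, t, by rw [← hρ]; rfl, rfl, fun b => by simpa using h (Sum.inr b)⟩
  · rintro ⟨ρ, s, t, rfl, rfl, hst⟩ (a | b)
    · rfl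
    · simp [hst]

end SumMap

lemma SurjFun.mem_stabilizer_iff {r k : ℕ} (p : Perm (Fin k) × Perm (Fin r)) (f : SurjFun r k) :
    p ∈ MulAction.stabilizer _ f ↔ ∀ x, p.1 (f.1 x) = f.1 (p.2 x) := by
  refine MulAction.mem_stabilizer_iff.trans (Iff.trans ⟨congrArg Subtype.val, Subtype.ext⟩ ?_)
  rw [funext_iff, p.2.symm.forall_congr_left]
  simp only [symm_symm, surj_smul_def, Perm.coe_inv, symm_apply_apply]

lemma SurjFun.permCongr_mem_stabilizer_iff {r k : ℕ} {X Y : Type*} {e₁ : X ≃ Fin k}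
    {e₂ : Y ≃ Fin r} {F : Y → X} {f : SurjFun r k} (hf : ∀ y, f.1 (e₂ y) = e₁ (F y))
    (σ : Perm X) (π : Perm Y) :
    (e₁.permCongr σ, e₂.permCongr π) ∈ MulAction.stabilizer _ f ↔ ∀ y, σ (F y) = F (π y) := by
  rw [mem_stabilizer_iff, e₂.symm.forall_congr_left]
  simp only [permCongr_apply, symm_symm, symm_apply_apply, hf, e₁.apply_eq_iff_eq]

def finSumFinEquivOfEq {a b n : ℕ} (h : a + b = n) : Fin a ⊕ Fin b ≃ Fin n :=
  finSumFinEquiv.trans (finCongr h)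

lemma castPermHom_embPair {a b n : ℕ} (h : a + b = n) (ρ : Perm (Fin a)) (g : Perm (Fin b)) :
    castPermHom h (embPair a b (ρ, g)) = (finSumFinEquivOfEq h).permCongr (Perm.sumCongr ρ g) :=
  rfl

def Fin.half (j : Fin 4) : Fin 2 := ⟨j / 2, by omega⟩

lemma Fin.exists_ne_half_eq (j : Fin 4) : ∃ j', j' ≠ j ∧ Fin.half j' = Fin.half j := by
  revert j
  decide

lemma kappa2_finSumFinEquivOfEq (k : ℕ) (hk : 2 ≤ k) (x : Fin (k - 2) ⊕ Fin 4) :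
    (kappa2 k hk).1 (finSumFinEquivOfEq (tsub_add_eq_add_tsub hk) x) =
      finSumFinEquivOfEq (Nat.sub_add_cancel hk) (Sum.map id Fin.half x) := by
  rcases x with i | j
  all_goals
    apply Fin.ext
    simp only [kappa2, finSumFinEquivOfEq, Fin.half, trans_apply, finCongr_apply, Fin.val_cast,
      finSumFinEquiv_apply_left, finSumFinEquiv_apply_right, Fin.val_castAdd, Fin.val_natAdd,
      Sum.map_inl, Sum.map_inr, id_eq]
    split_ifs <;> simp only <;> omega

lemma forall_half_comm_iff_mem_D4 (t : Perm (Fin 4)) (s : Perm (Fin 2)) :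
    (∀ j, s (Fin.half j) = Fin.half (t j)) ↔ t ∈ D4 ∧ s = nuFun t := by
  rw [mem_D4_iff]
  revert t s
  decide

/-- The parametrization `(ρ, τ) ↦ (ρ·ν(τ), ρτ)` of `K₂`. -/
def kappa2StabilizerHom (k : ℕ) (hk : 2 ≤ k) :
    Perm (Fin (k - 2)) × D4 →* Perm (Fin k) × Perm (Fin (k + 2)) :=
  ((castPermHom (Nat.sub_add_cancel hk)).comp
      ((embPair (k - 2) 2).comp ((MonoidHom.id _).prodMap nuHom))).prod
    ((castPermHom (tsub_add_eq_add_tsub hk)).comp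
      ((embPair (k - 2) 4).comp ((MonoidHom.id _).prodMap D4.subtype)))

lemma kappa2StabilizerHom_apply (k : ℕ) (hk : 2 ≤ k) (x : Perm (Fin (k - 2)) × D4) :
    kappa2StabilizerHom k hk x =
      (castPermHom (Nat.sub_add_cancel hk) (embPair (k - 2) 2 (x.1, nuHom x.2)),
        castPermHom (tsub_add_eq_add_tsub hk) (embPair (k - 2) 4 (x.1, x.2.1))) :=
  rfl

lemma kappa2StabilizerHom_injective (k : ℕ) (hk : 2 ≤ k) :
    Function.Injective (kappa2StabilizerHom k hk) := by
  intro x y hxy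
  simp only [kappa2StabilizerHom_apply, castPermHom_embPair, Prod.mk.injEq,
    EmbeddingLike.apply_eq_iff_eq] at hxy
  obtain ⟨hρ, hτ⟩ := Prod.mk.inj (Perm.sumCongrHom_injective (a₁ := (x.1, x.2.1))
    (a₂ := (y.1, y.2.1)) hxy.2)
  exact Prod.ext hρ (Subtype.ext hτ)

lemma stabilizer_kappa2_eq_range (k : ℕ) (hk : 2 ≤ k) :
    MulAction.stabilizer _ (kappa2 k hk) = (kappa2StabilizerHom k hk).range := by
  ext ⟨σ, π⟩
  obtain ⟨σ, rfl⟩ := (finSumFinEquivOfEq (Nat.sub_add_cancel hk)).permCongr.surjective σ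
  obtain ⟨π, rfl⟩ :=
    (finSumFinEquivOfEq (tsub_add_eq_add_tsub hk : k - 2 + 4 = k + 2)).permCongr.surjective π
  rw [SurjFun.permCongr_mem_stabilizer_iff (kappa2_finSumFinEquivOfEq k hk),
    Perm.sumMap_comm_iff Fin.exists_ne_half_eq]
  simp only [MonoidHom.mem_range, Prod.exists, kappa2StabilizerHom_apply, castPermHom_embPair,
    Prod.mk.injEq, (permCongr _).injective.eq_iff]
  constructor
  · rintro ⟨ρ, s, t, rfl, rfl, hst⟩
    obtain ⟨ht, rfl⟩ := (forall_half_comm_iff_mem_D4 t s).1 hst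
    exact ⟨ρ, ⟨t, ht⟩, rfl, rfl⟩
  · rintro ⟨ρ, τ, rfl, rfl⟩
    exact ⟨ρ, _, _, rfl, rfl, (forall_half_comm_iff_mem_D4 _ _).2 ⟨τ.2, rfl⟩⟩

/-- The stabilizer of `κ₂` under the `S_k × S_{k+2}`-action `(σ,π) ⬝ f = σ ∘ f ∘ π⁻¹`
on surjections is `K₂ = {(ρ·ν(τ), ρτ) : ρ ∈ S_{k-2}, τ ∈ D₄}` (with `S_{k-2}` embedded
in `S_k` and `S_{k+2}` fixing the points above `k-2`, `D₄` permuting the last four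
points of `{1,…,k+2}`, and `ν(τ) ∈ S₂` permuting the points `{k-1, k}` of `{1,…,k}`);
in particular it is isomorphic to `S_{k-2} × D₄`. -/
theorem stabilizer_kappa2 (k : ℕ) (hk : 2 ≤ k) :
    ((MulAction.stabilizer (Perm (Fin k) × Perm (Fin (k + 2))) (kappa2 k hk) : Set _) =
      {p : Perm (Fin k) × Perm (Fin (k + 2)) |
        ∃ (ρ : Perm (Fin (k - 2))) (τ : ↥D4),
          p = (castPermHom (show k - 2 + 2 = k by omega) (embPair (k - 2) 2 (ρ, nuHom τ)),
            castPermHom (show k - 2 + 4 = k + 2 by omega) (embPair (k - 2) 4 (ρ, τ.1)))}) ∧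
    Nonempty (↥(MulAction.stabilizer (Perm (Fin k) × Perm (Fin (k + 2))) (kappa2 k hk))
      ≃* Perm (Fin (k - 2)) × ↥D4) := by
  have hrange := stabilizer_kappa2_eq_range k hk
  refine ⟨?_, ⟨(MulEquiv.subgroupCongr hrange).trans
    (MonoidHom.ofInjective (kappa2StabilizerHom_injective k hk)).symm⟩⟩
  ext p
  rw [hrange, SetLike.mem_coe, MonoidHom.mem_range]
  simp only [Prod.exists, kappa2StabilizerHom_apply, Set.mem_ofPred_eq, eq_comm]

end
end
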